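/- arXiv:1808.03052 — 2 statements merged into one kernel-verified Lean document; each statement's English description precedes it below -/
import Mathlib

section
/- Let A be a unital complex Banach algebra and a, b ∈ A with ρ(a,b) = 0. Then for every k ∈ ℕ, ρ(a^k, b^k) = 0. -/
open Filter Metric

variable {A : Type*}

/-- The operator `C_{a,b} = L_a - R_b`. -/
noncomputable def Cop [NormedRing A] [NormedAlgebra ℂ A] (a b : A) : Module.End ℂ A :=
  LinearMap.mulLeft ℂ a - LinearMap.mulRight ℂ b

/-- `ρ(a,b) = limsup_n ‖C_{a,b}^n 1‖^{1/n}`. -/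
noncomputable def rho [NormedRing A] [NormedAlgebra ℂ A] (a b : A) : ℝ :=
  Filter.limsup (fun n : ℕ => ‖(Cop a b ^ n) 1‖ ^ (1 / (n : ℝ))) Filter.atTop

/-- The spectral semidistance `d(a,b) = max{ρ(a,b), ρ(b,a)}`. -/
noncomputable def qd [NormedRing A] [NormedAlgebra ℂ A] (a b : A) : ℝ :=
  max (rho a b) (rho b a)

/-- The Riesz projection of `a` at `lam`, computed over a circle of radius `r`. -/
noncomputable def rieszP [NormedRing A] [NormedAlgebra ℂ A] (a : A) (lam : ℂ) (r : ℝ) : A :=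
  ((2 * Real.pi * Complex.I : ℂ))⁻¹ •
    circleIntegral (fun z => Ring.inverse (algebraMap ℂ A z - a)) lam r

open scoped Classical in
/-- The Riesz projection at an isolated spectral point (radius chosen by choice). -/
noncomputable def rieszIdem [NormedRing A] [NormedAlgebra ℂ A] (a : A) (lam : ℂ) : A :=
  if h : ∃ r : ℝ, 0 < r ∧ spectrum ℂ a ∩ closedBall lam r = {lam}
  then rieszP a lam h.choose else 0

/-- The Aupetit–Mouton spectral rank. -/
noncomputable def sRank [NormedRing A] [NormedAlgebra ℂ A] (a : A) : ℕ∞ :=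
  ⨆ x : A, (spectrum ℂ (x * a) \ {0}).encard

/-- Spectral multiplicity at a nonzero isolated spectral point: rank of the Riesz projection. -/
noncomputable def sMult [NormedRing A] [NormedAlgebra ℂ A] (a : A) (lam : ℂ) : ℕ :=
  (sRank (rieszIdem a lam)).toNat

/-- The Aupetit–Mouton spectral trace. -/
noncomputable def sTrace [NormedRing A] [NormedAlgebra ℂ A] (a : A) : ℂ :=
  ∑ᶠ lam ∈ spectrum ℂ a \ {0}, lam * (sMult a lam : ℂ)

/-- `det(1 + λ a)`, the Aupetit–Mouton spectral determinant. -/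
noncomputable def sDet [NormedRing A] [NormedAlgebra ℂ A] (a : A) (lam : ℂ) : ℂ :=
  ∏ᶠ mu ∈ spectrum ℂ a \ {0}, (1 + lam * mu) ^ sMult a mu

/-- The socle: the sum of all minimal left ideals. -/
def socle (A : Type*) [Ring A] : Ideal A := sSup {I : Ideal A | IsAtom I}

/-- Semisimplicity: the Jacobson radical is zero. -/
def IsSemisimpleBA (A : Type*) [Ring A] : Prop := Ideal.jacobson (⊥ : Ideal A) = ⊥

/-!
With `L` and `R` left multiplication by `a` and right multiplication by `b`, the operators `L`
and `R` commute, so `C_{a^k,b^k} = L^k - R^k = P C_{a,b}` where `P = ∑_{i<k} L^i R^{k-1-i}`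
commutes with `C_{a,b}` and satisfies `‖P z‖ ≤ M ‖z‖`. Hence
`‖C_{a^k,b^k}^n 1‖ ≤ M^n ‖C_{a,b}^n 1‖`, and after taking `n`-th roots the sequence defining
`ρ(a^k,b^k)` is squeezed to `0` by `M` times the one defining `ρ(a,b)`.
-/

open Topology

lemma Module.End.norm_pow_apply_le {R E : Type*} [Semiring R] [SeminormedAddCommGroup E]
    [Module R E] {T : Module.End R E} {c : ℝ} (hc : 0 ≤ c) (hT : ∀ z, ‖T z‖ ≤ c * ‖z‖)
    (n : ℕ) (z : E) : ‖(T ^ n) z‖ ≤ c ^ n * ‖z‖ := by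
  induction n with
  | zero => simp
  | succ n ih =>
    calc ‖(T ^ (n + 1)) z‖ = ‖T ((T ^ n) z)‖ := by rw [pow_succ', Module.End.mul_apply]
      _ ≤ c * (c ^ n * ‖z‖) := by grw [hT, ih]
      _ = c ^ (n + 1) * ‖z‖ := by ring

lemma Real.rpow_one_div_le_mul_of_le_pow_mul {x y c : ℝ} {n : ℕ} (hx : 0 ≤ x) (hy : 0 ≤ y)
    (hc : 0 ≤ c) (hn : n ≠ 0) (h : x ≤ c ^ n * y) :
    x ^ (1 / (n : ℝ)) ≤ c * y ^ (1 / (n : ℝ)) :=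
  calc x ^ (1 / (n : ℝ)) ≤ (c ^ n * y) ^ (1 / (n : ℝ)) := by gcongr
    _ = c * y ^ (1 / (n : ℝ)) := by
      rw [Real.mul_rpow (by positivity) hy, one_div, Real.pow_rpow_inv_natCast hc hn]

lemma Commute.geom_sum₂_commute_sub {R : Type*} [Ring R] {x y : R} (h : Commute x y) (k : ℕ) :
    Commute (∑ i ∈ Finset.range k, x ^ i * y ^ (k - 1 - i)) (x - y) :=
  Commute.sum_left _ _ _ fun i _ =>
    (((Commute.refl x).pow_left i).sub_right (h.pow_left i)).mul_left
      ((h.symm.pow_left _).sub_right ((Commute.refl y).pow_left _))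

section Cop

variable [NormedRing A] [NormedAlgebra ℂ A]

lemma norm_cop_apply_le (a b z : A) : ‖Cop a b z‖ ≤ (‖a‖ + ‖b‖) * ‖z‖ :=
  calc ‖a * z - z * b‖ ≤ ‖a‖ * ‖z‖ + ‖z‖ * ‖b‖ := by grw [norm_sub_le, norm_mul_le, norm_mul_le]
    _ = (‖a‖ + ‖b‖) * ‖z‖ := by ring

lemma norm_sum_mulLeft_pow_mul_mulRight_pow_apply_le (a b z : A) (k : ℕ) :
    ‖(∑ i ∈ Finset.range k,
        LinearMap.mulLeft ℂ a ^ i * LinearMap.mulRight ℂ b ^ (k - 1 - i)) z‖ ≤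
      (∑ i ∈ Finset.range k, ‖a ^ i‖ * ‖b ^ (k - 1 - i)‖) * ‖z‖ := by
  rw [LinearMap.sum_apply, Finset.sum_mul]
  refine (norm_sum_le _ _).trans (Finset.sum_le_sum fun i _ => ?_)
  simp only [Module.End.mul_apply, LinearMap.pow_mulLeft, LinearMap.pow_mulRight,
    LinearMap.mulLeft_apply, LinearMap.mulRight_apply]
  calc ‖a ^ i * (z * b ^ (k - 1 - i))‖ ≤ ‖a ^ i‖ * (‖z‖ * ‖b ^ (k - 1 - i)‖) := by
        grw [norm_mul_le, norm_mul_le]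
    _ = ‖a ^ i‖ * ‖b ^ (k - 1 - i)‖ * ‖z‖ := by ring

lemma exists_norm_cop_pow_pow_apply_one_le (a b : A) (k : ℕ) :
    ∃ M, 0 ≤ M ∧ ∀ n : ℕ, ‖(Cop (a ^ k) (b ^ k) ^ n) 1‖ ≤ M ^ n * ‖(Cop a b ^ n) 1‖ := by
  set L := LinearMap.mulLeft ℂ a
  set R := LinearMap.mulRight ℂ b
  set P : Module.End ℂ A := ∑ i ∈ Finset.range k, L ^ i * R ^ (k - 1 - i)
  have hLR : Commute L R := LinearMap.commute_mulLeft_right a b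
  have hfactor : Cop (a ^ k) (b ^ k) = P * Cop a b := by
    rw [Cop, ← LinearMap.pow_mulLeft, ← LinearMap.pow_mulRight, Cop]
    exact (hLR.geom_sum₂_mul k).symm
  have hP : Commute P (Cop a b) := hLR.geom_sum₂_commute_sub k
  refine ⟨∑ i ∈ Finset.range k, ‖a ^ i‖ * ‖b ^ (k - 1 - i)‖, by positivity, fun n => ?_⟩
  rw [hfactor, hP.mul_pow, Module.End.mul_apply]
  exact Module.End.norm_pow_apply_le (by positivity)
    (norm_sum_mulLeft_pow_mul_mulRight_pow_apply_le a b · k) n _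

noncomputable def rhoSeq (a b : A) (n : ℕ) : ℝ := ‖(Cop a b ^ n) 1‖ ^ (1 / (n : ℝ))

lemma rhoSeq_nonneg (a b : A) (n : ℕ) : 0 ≤ rhoSeq a b n :=
  Real.rpow_nonneg (norm_nonneg _) _

lemma rhoSeq_le (a b : A) {n : ℕ} (hn : n ≠ 0) :
    rhoSeq a b n ≤ (‖a‖ + ‖b‖) * (‖(1 : A)‖ + 1) := by
  have hpow : ‖(Cop a b ^ n) 1‖ ≤ ((‖a‖ + ‖b‖) * (‖(1 : A)‖ + 1)) ^ n * 1 :=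
    calc ‖(Cop a b ^ n) 1‖ ≤ (‖a‖ + ‖b‖) ^ n * ‖(1 : A)‖ :=
          Module.End.norm_pow_apply_le (by positivity) (norm_cop_apply_le a b) n 1
      _ ≤ (‖a‖ + ‖b‖) ^ n * (‖(1 : A)‖ + 1) ^ n := by
          gcongr; exact (le_self_pow₀ (by simp) hn).trans' (by linarith)
      _ = ((‖a‖ + ‖b‖) * (‖(1 : A)‖ + 1)) ^ n * 1 := by rw [mul_pow, mul_one]
  have hroot := Real.rpow_one_div_le_mul_of_le_pow_mul (norm_nonneg _) zero_le_one
    (by positivity) hn hpow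
  rwa [Real.one_rpow, mul_one] at hroot

/-- A `limsup` in `ℝ` is only meaningful for bounded sequences (otherwise it is the junk value
`0`); `rhoSeq_le` is what makes `rho a b = 0` a genuine statement. -/
lemma rho_eq_zero_iff_tendsto_rhoSeq (a b : A) :
    rho a b = 0 ↔ Tendsto (rhoSeq a b) atTop (𝓝 0) := by
  have hbdd : IsBoundedUnder (· ≤ ·) atTop (rhoSeq a b) :=
    isBoundedUnder_of_eventually_le ((eventually_ne_atTop 0).mono fun _ => rhoSeq_le a b)
  have hnonneg : ∀ᶠ n in atTop, 0 ≤ rhoSeq a b n := Eventually.of_forall (rhoSeq_nonneg a b)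
  refine ⟨fun h => tendsto_of_le_liminf_of_limsup_le ?_ h.le hbdd
    (isBoundedUnder_of_eventually_ge hnonneg), Tendsto.limsup_eq⟩
  exact le_liminf_of_le hbdd.isCoboundedUnder_ge hnonneg

end Cop

theorem stmt6 [NormedRing A] [NormedAlgebra ℂ A] (a b : A) (h : rho a b = 0) (k : ℕ) :
    rho (a ^ k) (b ^ k) = 0 := by
  obtain ⟨M, hM, hle⟩ := exists_norm_cop_pow_pow_apply_one_le a b k
  rw [rho_eq_zero_iff_tendsto_rhoSeq] at h ⊢
  refine squeeze_zero' (Eventually.of_forall (rhoSeq_nonneg _ _)) ?_ (by simpa using h.const_mul M)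
  filter_upwards [eventually_ne_atTop 0] with n hn
  exact Real.rpow_one_div_le_mul_of_le_pow_mul (norm_nonneg _) (norm_nonneg _) hM hn (hle n)
end

section
/- Let A be a unital complex Banach algebra, a, b ∈ A with d(a,b) = 0, and let λ₁ ≠ 0 be an isolated point of σ(a) = σ(b). If the Riesz projections p₁ = p(λ₁,a) and q₁ = p(λ₁,b) satisfy a p₁ = λ₁ p₁ and b q₁ = λ₁ q₁, then p₁ = q₁. -/
open Filter Metric

variable {A : Type*}

/-!
Iterating the identity `R_a(z) x = x R_b(z) + R_a(z) C_{a,b}(x) R_b(z)` between the resolvents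
`R_a(z) = (z - a)⁻¹` and `R_b(z) = (z - b)⁻¹` gives
`R_a = ∑_{k ≤ n} C_{a,b}^k(1) R_b^{k+1} + R_a C_{a,b}^{n+1}(1) R_b^{n+1}` on the circle.
For `k ≥ 1` the power `R_b^{k+1}` is, up to a constant, the derivative of `R_b^k`, so its contour
integral vanishes, and `∮ R_a - ∮ R_b = ∮ R_a C_{a,b}^{n+1}(1) R_b^{n+1}` for every `n`.
Since `ρ(a,b) = 0`, `‖C_{a,b}^n(1)‖` decays faster than any geometric sequence, which kills the
bound `2πr ‖R_a‖_∞ ‖C_{a,b}^{n+1}(1)‖ ‖R_b‖_∞^{n+1}` on the right-hand side.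
-/

open Topology

lemma tendsto_mul_pow_of_limsup_rpow_nonpos {u : ℕ → ℝ} (hu : ∀ n, 0 ≤ u n)
    (hbdd : IsBoundedUnder (· ≤ ·) atTop fun n : ℕ => u n ^ (1 / (n : ℝ)))
    (h : limsup (fun n : ℕ => u n ^ (1 / (n : ℝ))) atTop ≤ 0) (M : ℝ) :
    Tendsto (fun n => u n * M ^ n) atTop (𝓝 0) := by
  set M' := |M| + 1
  have hM' : 0 < M' := by positivity
  have hroot : ∀ᶠ n : ℕ in atTop, u n ^ (1 / (n : ℝ)) < (2 * M')⁻¹ :=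
    eventually_lt_of_limsup_lt (h.trans_lt (by positivity)) hbdd
  refine squeeze_zero_norm' ?_ (tendsto_pow_atTop_nhds_zero_of_lt_one (r := 1 / 2)
    (by norm_num) (by norm_num))
  filter_upwards [hroot, eventually_ge_atTop 1] with n hn hn1
  calc ‖u n * M ^ n‖ = u n * |M| ^ n := by
        rw [norm_mul, norm_pow, Real.norm_eq_abs, Real.norm_eq_abs, abs_of_nonneg (hu n)]
    _ ≤ u n * M' ^ n :=
        mul_le_mul_of_nonneg_left (pow_le_pow_left₀ (abs_nonneg M) (by linarith) n) (hu n)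
    _ = (u n ^ (1 / (n : ℝ)) * M') ^ n := by
        rw [mul_pow, one_div, Real.rpow_inv_natCast_pow (hu n) (by omega)]
    _ ≤ ((2 * M')⁻¹ * M') ^ n := by
        have := Real.rpow_nonneg (hu n) (1 / (n : ℝ))
        gcongr
    _ = (1 / 2) ^ n := by field_simp

section Algebra

variable [NormedRing A] [NormedAlgebra ℂ A] {a b : A}

lemma Cop_apply (a b x : A) : Cop a b x = a * x - x * b := rfl

lemma Cop_pow_succ_apply (a b x : A) (n : ℕ) :
    (Cop a b ^ (n + 1)) x = Cop a b ((Cop a b ^ n) x) := by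
  rw [pow_succ', Module.End.mul_apply]

lemma norm_Cop_pow_apply_le (a b x : A) (n : ℕ) :
    ‖(Cop a b ^ n) x‖ ≤ (‖a‖ + ‖b‖) ^ n * ‖x‖ := by
  induction n with
  | zero => simp
  | succ n ih =>
    set y := (Cop a b ^ n) x
    calc ‖(Cop a b ^ (n + 1)) x‖ = ‖a * y - y * b‖ := by rw [Cop_pow_succ_apply, Cop_apply]
      _ ≤ ‖a‖ * ‖y‖ + ‖y‖ * ‖b‖ :=
        (norm_sub_le _ _).trans (add_le_add (norm_mul_le _ _) (norm_mul_le _ _))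
      _ = (‖a‖ + ‖b‖) * ‖y‖ := by ring
      _ ≤ (‖a‖ + ‖b‖) * ((‖a‖ + ‖b‖) ^ n * ‖x‖) := by gcongr
      _ = (‖a‖ + ‖b‖) ^ (n + 1) * ‖x‖ := by ring

/-- `rho` is a `limsup` in `ℝ`, which takes the junk value `0` on sequences unbounded above;
this bound is what makes `rho a b ≤ 0` meaningful. -/
lemma isBoundedUnder_rpow_norm_Cop_pow (a b x : A) :
    IsBoundedUnder (· ≤ ·) atTop fun n : ℕ => ‖(Cop a b ^ n) x‖ ^ (1 / (n : ℝ)) := by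
  set K := ‖a‖ + ‖b‖
  set L := max 1 ‖x‖
  refine isBoundedUnder_of_eventually_le (a := K * L) ?_
  filter_upwards [eventually_ge_atTop 1] with n hn
  have hL : ‖x‖ ^ (1 / (n : ℝ)) ≤ L :=
    calc ‖x‖ ^ (1 / (n : ℝ)) ≤ L ^ (1 / (n : ℝ)) := by gcongr; exact le_max_right _ _
      _ ≤ L ^ (1 : ℝ) := by
        apply Real.rpow_le_rpow_of_exponent_le (le_max_left _ _)
        rw [div_le_one (by positivity)]
        exact_mod_cast hn
      _ = L := Real.rpow_one L
  calc ‖(Cop a b ^ n) x‖ ^ (1 / (n : ℝ)) ≤ (K ^ n * ‖x‖) ^ (1 / (n : ℝ)) := by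
        gcongr; exact norm_Cop_pow_apply_le a b x n
    _ = K * ‖x‖ ^ (1 / (n : ℝ)) := by
        rw [Real.mul_rpow (by positivity) (by positivity), one_div,
          Real.pow_rpow_inv_natCast (by positivity) (by omega)]
    _ ≤ K * L := by gcongr

lemma tendsto_norm_Cop_pow_mul_pow (h : rho a b ≤ 0) (M : ℝ) :
    Tendsto (fun n => ‖(Cop a b ^ n) 1‖ * M ^ n) atTop (𝓝 0) :=
  tendsto_mul_pow_of_limsup_rpow_nonpos (fun _ => norm_nonneg _)
    (isBoundedUnder_rpow_norm_Cop_pow a b 1) h M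

lemma resolvent_mul_eq {z : ℂ} (ha : z ∈ resolventSet ℂ a) (hb : z ∈ resolventSet ℂ b) (x : A) :
    resolvent a z * x = x * resolvent b z + resolvent a z * Cop a b x * resolvent b z := by
  have hRa : resolvent a z * (algebraMap ℂ A z - a) = 1 := Ring.inverse_mul_cancel _ ha
  have hRb : (algebraMap ℂ A z - b) * resolvent b z = 1 := Ring.mul_inverse_cancel _ hb
  have hx : x * (algebraMap ℂ A z - b) = (algebraMap ℂ A z - a) * x + Cop a b x := by
    rw [Cop_apply, mul_sub, sub_mul, ← Algebra.commutes z x]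
    noncomm_ring
  calc resolvent a z * x = resolvent a z * (x * (algebraMap ℂ A z - b)) * resolvent b z := by
        rw [← mul_assoc, mul_assoc _ _ (resolvent b z), hRb, mul_one]
    _ = resolvent a z * (algebraMap ℂ A z - a) * x * resolvent b z
          + resolvent a z * Cop a b x * resolvent b z := by
        rw [hx]; noncomm_ring
    _ = x * resolvent b z + resolvent a z * Cop a b x * resolvent b z := by
        rw [hRa, one_mul, mul_assoc]

lemma sphere_subset_resolventSet {c : ℂ} {r : ℝ} (hr : 0 < r)
    (h : spectrum ℂ a ∩ closedBall c r = {c}) : sphere c r ⊆ resolventSet ℂ a := by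
  intro z hz
  by_contra hza
  have hzc : z ∈ ({c} : Set ℂ) := h ▸ ⟨hza, sphere_subset_closedBall hz⟩
  rw [Set.mem_singleton_iff] at hzc
  subst hzc
  exact hr.ne (by simpa using hz)

lemma rieszP_eq_smul_circleIntegral_resolvent (a : A) (c : ℂ) (r : ℝ) :
    rieszP a c r = (2 * Real.pi * Complex.I : ℂ)⁻¹ • ∮ z in C(c, r), resolvent a z :=
  rfl

end Algebra

section Analytic

variable [NormedRing A] [NormedAlgebra ℂ A] [CompleteSpace A] {a b : A} {c : ℂ} {r : ℝ}

lemma continuousOn_resolvent {s : Set ℂ} (h : s ⊆ resolventSet ℂ a) :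
    ContinuousOn (resolvent a) s := fun _ hz =>
  (spectrum.hasDerivAt_resolvent_const_left (h hz)).continuousAt.continuousWithinAt

lemma hasDerivAt_resolvent_pow {z : ℂ} (hz : z ∈ resolventSet ℂ a) (n : ℕ) :
    HasDerivAt (fun w => resolvent a w ^ n) (-(n : ℂ) • resolvent a z ^ (n + 1)) z := by
  convert (spectrum.hasDerivAt_resolvent_const_left hz).fun_pow' n using 1
  have hterm : ∀ i ∈ Finset.range n,
      resolvent a z ^ (n.pred - i) * -resolvent a z ^ 2 * resolvent a z ^ i
        = -resolvent a z ^ (n + 1) := by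
    intro i hi
    have hin : i < n := Finset.mem_range.mp hi
    rw [mul_neg, neg_mul, ← pow_add, ← pow_add, Nat.pred_eq_sub_one]
    congr 2
    omega
  rw [Finset.sum_congr rfl hterm, Finset.sum_const, Finset.card_range, neg_smul, smul_neg,
    Nat.cast_smul_eq_nsmul]

lemma circleIntegral_resolvent_pow_eq_zero (hr : 0 ≤ r) (h : sphere c r ⊆ resolventSet ℂ a)
    {n : ℕ} (hn : 2 ≤ n) : (∮ z in C(c, r), resolvent a z ^ n) = 0 := by
  obtain ⟨m, rfl⟩ := Nat.exists_eq_add_of_le' hn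
  have hm : (-((m + 1 : ℕ) : ℂ)) ≠ 0 := neg_ne_zero.mpr (Nat.cast_ne_zero.mpr m.succ_ne_zero)
  refine circleIntegral.integral_eq_zero_of_hasDerivWithinAt hr
    (f := fun w => (-((m + 1 : ℕ) : ℂ))⁻¹ • resolvent a w ^ (m + 1)) fun z hz => ?_
  have hD := (hasDerivAt_resolvent_pow (h hz) (m + 1)).const_smul (-((m + 1 : ℕ) : ℂ))⁻¹
  rw [smul_smul, inv_mul_cancel₀ hm, one_smul] at hD
  exact hD.hasDerivWithinAt

lemma circleIntegral_const_mul (x : A) {f : ℂ → A} (hf : CircleIntegrable f c r) :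
    (∮ z in C(c, r), x * f z) = x * ∮ z in C(c, r), f z := by
  simp only [circleIntegral, ← mul_smul_comm]
  exact (ContinuousLinearMap.mul ℂ A x).intervalIntegral_comp_comm hf.out

lemma circleIntegral_resolvent_mul_mul_pow (hr : 0 ≤ r) (ha : sphere c r ⊆ resolventSet ℂ a)
    (hb : sphere c r ⊆ resolventSet ℂ b) (x : A) (n : ℕ) :
    (∮ z in C(c, r), resolvent a z * x * resolvent b z ^ n)
      = x * (∮ z in C(c, r), resolvent b z ^ (n + 1))
        + ∮ z in C(c, r), resolvent a z * Cop a b x * resolvent b z ^ (n + 1) := by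
  have hRa := continuousOn_resolvent ha
  have hRb := continuousOn_resolvent hb
  have hpt : Set.EqOn (fun z => resolvent a z * x * resolvent b z ^ n)
      (fun z => x * resolvent b z ^ (n + 1)
        + resolvent a z * Cop a b x * resolvent b z ^ (n + 1)) (sphere c r) := fun z hz => by
    simp only [resolvent_mul_eq (ha hz) (hb hz) x, add_mul, mul_assoc, ← pow_succ']
  have hpow : CircleIntegrable (fun z => resolvent b z ^ (n + 1)) c r :=
    (hRb.pow _).circleIntegrable hr
  have hmul : CircleIntegrable (fun z => x * resolvent b z ^ (n + 1)) c r :=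
    (continuousOn_const.mul (hRb.pow _)).circleIntegrable hr
  have hrem : CircleIntegrable
      (fun z => resolvent a z * Cop a b x * resolvent b z ^ (n + 1)) c r :=
    ((hRa.mul continuousOn_const).mul (hRb.pow _)).circleIntegrable hr
  rw [circleIntegral.integral_congr hr hpt,
    circleIntegral.integral_add hmul hrem,
    circleIntegral_const_mul x hpow]

lemma circleIntegral_resolvent_sub_resolvent (hr : 0 ≤ r) (ha : sphere c r ⊆ resolventSet ℂ a)
    (hb : sphere c r ⊆ resolventSet ℂ b) (n : ℕ) :
    (∮ z in C(c, r), resolvent a z) - (∮ z in C(c, r), resolvent b z)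
      = ∮ z in C(c, r), resolvent a z * (Cop a b ^ (n + 1)) 1 * resolvent b z ^ (n + 1) := by
  induction n with
  | zero =>
    have h := circleIntegral_resolvent_mul_mul_pow hr ha hb 1 0
    simp only [mul_one, pow_zero, one_mul, zero_add, pow_one] at h
    simp only [h, add_sub_cancel_left, zero_add, pow_one]
  | succ n ih =>
    rw [ih, circleIntegral_resolvent_mul_mul_pow hr ha hb,
      circleIntegral_resolvent_pow_eq_zero hr hb (by omega), mul_zero, zero_add,
      ← Cop_pow_succ_apply]

theorem rieszP_eq_rieszP_of_rho_nonpos (h : rho a b ≤ 0) (hr : 0 ≤ r)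
    (ha : sphere c r ⊆ resolventSet ℂ a) (hb : sphere c r ⊆ resolventSet ℂ b) :
    rieszP a c r = rieszP b c r := by
  obtain ⟨Ka, hKa⟩ := (isCompact_sphere c r).exists_bound_of_continuousOn
    (continuousOn_resolvent ha)
  obtain ⟨Mb, hMb⟩ := (isCompact_sphere c r).exists_bound_of_continuousOn
    (continuousOn_resolvent hb)
  have hbound : ∀ n : ℕ,
      ‖(∮ z in C(c, r), resolvent a z) - ∮ z in C(c, r), resolvent b z‖
        ≤ 2 * Real.pi * r * Ka * (‖(Cop a b ^ (n + 1)) 1‖ * Mb ^ (n + 1)) := by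
    intro n
    rw [circleIntegral_resolvent_sub_resolvent hr ha hb n]
    refine (circleIntegral.norm_integral_le_of_norm_le_const
      (C := Ka * ‖(Cop a b ^ (n + 1)) 1‖ * Mb ^ (n + 1)) hr fun z hz => ?_).trans_eq (by ring)
    calc ‖resolvent a z * (Cop a b ^ (n + 1)) 1 * resolvent b z ^ (n + 1)‖
        ≤ ‖resolvent a z‖ * ‖(Cop a b ^ (n + 1)) 1‖ * ‖resolvent b z‖ ^ (n + 1) :=
          (norm_mul₃_le ..).trans (by gcongr; exact norm_pow_le' _ n.succ_pos)
      _ ≤ Ka * ‖(Cop a b ^ (n + 1)) 1‖ * Mb ^ (n + 1) := by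
          have hKa0 : 0 ≤ Ka := (norm_nonneg _).trans (hKa z hz)
          gcongr
          exacts [hKa z hz, hMb z hz]
  have hlim := ((tendsto_norm_Cop_pow_mul_pow h Mb).comp (tendsto_add_atTop_nat 1)).const_mul
    (2 * Real.pi * r * Ka)
  rw [mul_zero] at hlim
  rw [rieszP_eq_smul_circleIntegral_resolvent, rieszP_eq_smul_circleIntegral_resolvent,
    sub_eq_zero.mp (norm_le_zero_iff.mp (ge_of_tendsto' hlim hbound))]

end Analytic

theorem stmt14_general [NormedRing A] [NormedAlgebra ℂ A] [CompleteSpace A]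
    (a b : A) (lam1 : ℂ) (r : ℝ)
    (hd : qd a b = 0)
    (hr : 0 < r) (hisoa : spectrum ℂ a ∩ closedBall lam1 r = {lam1})
    (hisob : spectrum ℂ b ∩ closedBall lam1 r = {lam1}) :
    rieszP a lam1 r = rieszP b lam1 r :=
  rieszP_eq_rieszP_of_rho_nonpos (hd ▸ le_max_left _ _) hr.le
    (sphere_subset_resolventSet hr hisoa) (sphere_subset_resolventSet hr hisob)

theorem stmt14 [NormedRing A] [NormedAlgebra ℂ A] [CompleteSpace A]
    (a b : A) (lam1 : ℂ) (r : ℝ)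
    (hd : qd a b = 0) (hlam : lam1 ≠ 0) (hspec : spectrum ℂ a = spectrum ℂ b)
    (hr : 0 < r) (hisoa : spectrum ℂ a ∩ closedBall lam1 r = {lam1})
    (hisob : spectrum ℂ b ∩ closedBall lam1 r = {lam1})
    (hp : a * rieszP a lam1 r = lam1 • rieszP a lam1 r)
    (hq : b * rieszP b lam1 r = lam1 • rieszP b lam1 r) :
    rieszP a lam1 r = rieszP b lam1 r :=
  stmt14_general a b lam1 r hd hr hisoa hisob
end
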